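/- (Covariance of scaled residual growth under heterogeneous skill-growth profiles.) In the HIP setting, for all integers t, t' with t − t' ≥ k + 1, if μ_t, μ_{t−1}, μ_{t'}, μ_{t'−1} are all nonzero, then cov( w_t/μ_t − w_{t−1}/μ_{t−1} , w_{t'}/μ_{t'} − w_{t'−1}/μ_{t'−1} ) = λ_t · λ_{t'} · Var(δ). -/

import Mathlib

open MeasureTheory ProbabilityTheory

/-- Covariance of two real-valued random variables under measure `P`. -/
noncomputable def cov {Ω : Type*} [MeasurableSpace Ω] (P : Measure Ω) (X Y : Ω → ℝ) : ℝ :=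
  ∫ ω, (X ω - ∫ a, X a ∂P) * (Y ω - ∫ a, Y a ∂P) ∂P

/-- Variance of a real-valued random variable under measure `P`. -/
noncomputable def Var {Ω : Type*} [MeasurableSpace Ω] (P : Measure Ω) (X : Ω → ℝ) : ℝ :=
  cov P X X

/-! Dividing `w_s` by `μ_s` turns the growth of scaled residuals into the skill growth
`θ_s - θ_{s-1} = λ_s δ + ν_s` plus the transitory term `ε_s / μ_s - ε_{s-1} / μ_{s-1}`.
Once `t - t' ≥ k + 1`, the transitory terms at `t` and `t'` involve shocks at least `k` periods
apart, so every cross covariance vanishes except the one through the common growth factor `δ`. -/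

lemma cov_eq_covariance {Ω : Type*} [MeasurableSpace Ω] (P : Measure Ω) (X Y : Ω → ℝ) :
    cov P X Y = cov[X, Y; P] := rfl

section ScaledGrowth

variable {Ω : Type*}

noncomputable def scaledGrowth (x : ℤ → Ω → ℝ) (μ : ℤ → ℝ) (s : ℤ) : Ω → ℝ :=
  fun ω ↦ x s ω / μ s - x (s - 1) ω / μ (s - 1)

lemma scaledGrowth_of_eq_mul_add {w θ ε : ℤ → Ω → ℝ} {μ : ℤ → ℝ}
    (hw : ∀ s ω, w s ω = μ s * θ s ω + ε s ω) {s : ℤ} (hs : μ s ≠ 0) (hs₁ : μ (s - 1) ≠ 0) :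
    scaledGrowth w μ s = fun ω ↦ θ s ω - θ (s - 1) ω + scaledGrowth ε μ s ω := by
  funext ω
  simp only [scaledGrowth, hw]
  field_simp
  ring

variable [MeasurableSpace Ω] {P : Measure Ω}

lemma memLp_fun_div_const {f : Ω → ℝ} {p : ENNReal} (hf : MemLp f p P) (c : ℝ) :
    MemLp (fun ω ↦ f ω / c) p P := by
  simpa only [div_eq_mul_inv] using hf.mul_const c⁻¹

lemma memLp_scaledGrowth {x : ℤ → Ω → ℝ} (hx : ∀ s, MemLp (x s) 2 P) (μ : ℤ → ℝ) (s : ℤ) :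
    MemLp (scaledGrowth x μ s) 2 P :=
  (memLp_fun_div_const (hx s) _).sub (memLp_fun_div_const (hx (s - 1)) _)

variable [IsFiniteMeasure P]

lemma covariance_const_mul_add_const_mul_add {X U V : Ω → ℝ} (a b : ℝ)
    (hX : MemLp X 2 P) (hU : MemLp U 2 P) (hV : MemLp V 2 P)
    (hXV : cov[X, V; P] = 0) (hUX : cov[U, X; P] = 0) (hUV : cov[U, V; P] = 0) :
    cov[fun ω ↦ a * X ω + U ω, fun ω ↦ b * X ω + V ω; P] = a * b * cov[X, X; P] := by
  have haX := hX.const_mul a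
  have hbX := hX.const_mul b
  change cov[(fun ω ↦ a * X ω) + U, (fun ω ↦ b * X ω) + V; P] = _
  rw [covariance_add_left haX hU (hbX.add hV), covariance_add_right haX hbX hV,
    covariance_add_right hU hbX hV, covariance_const_mul_left, covariance_const_mul_left,
    covariance_const_mul_right, covariance_const_mul_right, hXV, hUX, hUV]
  ring

lemma covariance_scaledGrowth_right {X : Ω → ℝ} {x : ℤ → Ω → ℝ} (hX : MemLp X 2 P)
    (hx : ∀ s, MemLp (x s) 2 P) (μ : ℤ → ℝ) (s : ℤ) :
    cov[X, scaledGrowth x μ s; P] = cov[X, x s; P] / μ s - cov[X, x (s - 1); P] / μ (s - 1) := by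
  unfold scaledGrowth
  rw [covariance_fun_sub_right hX (memLp_fun_div_const (hx s) _)
      (memLp_fun_div_const (hx (s - 1)) _),
    covariance_fun_div_right, covariance_fun_div_right]

lemma covariance_scaledGrowth_left {X : Ω → ℝ} {x : ℤ → Ω → ℝ} (hX : MemLp X 2 P)
    (hx : ∀ s, MemLp (x s) 2 P) (μ : ℤ → ℝ) (s : ℤ) :
    cov[scaledGrowth x μ s, X; P] = cov[x s, X; P] / μ s - cov[x (s - 1), X; P] / μ (s - 1) := by
  rw [covariance_comm, covariance_scaledGrowth_right hX hx, covariance_comm X, covariance_comm X]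

section Shocks

variable {ε : ℤ → Ω → ℝ} (hε : ∀ s, MemLp (ε s) 2 P) {k : ℕ}
  (hεε : ∀ s s' : ℤ, (k : ℤ) ≤ |s - s'| → cov[ε s, ε s'; P] = 0) (μ : ℤ → ℝ) {t t' : ℤ}
  (hgap : (k : ℤ) + 1 ≤ t - t')
include hε hεε hgap

lemma covariance_scaledGrowth_scaledGrowth_eq_zero :
    cov[scaledGrowth ε μ t, scaledGrowth ε μ t'; P] = 0 := by
  have hfar : ∀ a b : ℤ, (k : ℤ) ≤ a - b → cov[ε a, ε b; P] = 0 :=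
    fun a b h ↦ hεε a b (h.trans (le_abs_self _))
  rw [covariance_scaledGrowth_left (memLp_scaledGrowth hε μ t') hε,
    covariance_scaledGrowth_right (hε t) hε, covariance_scaledGrowth_right (hε (t - 1)) hε,
    hfar t t' (by omega), hfar t (t' - 1) (by omega), hfar (t - 1) t' (by omega),
    hfar (t - 1) (t' - 1) (by omega)]
  simp

lemma covariance_add_scaledGrowth_add_scaledGrowth_eq_zero {ν : ℤ → Ω → ℝ}
    (hν : ∀ s, MemLp (ν s) 2 P) (hνν : cov[ν t, ν t'; P] = 0)
    (hνε : ∀ s s' : ℤ, cov[ν s, ε s'; P] = 0) :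
    cov[ν t + scaledGrowth ε μ t, ν t' + scaledGrowth ε μ t'; P] = 0 := by
  have hG := memLp_scaledGrowth hε μ
  rw [covariance_add_left (hν t) (hG t) ((hν t').add (hG t')),
    covariance_add_right (hν t) (hν t') (hG t'), covariance_add_right (hG t) (hν t') (hG t'),
    covariance_scaledGrowth_right (hν t) hε, covariance_scaledGrowth_left (hν t') hε,
    covariance_scaledGrowth_scaledGrowth_eq_zero hε hεε μ hgap, hνν, hνε, hνε,
    covariance_comm (ε t), covariance_comm (ε (t - 1)), hνε, hνε]
  simp

end Shocks

end ScaledGrowth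

theorem HIP_cov_scaled_growth_general
    {Ω : Type*} [MeasurableSpace Ω] (P : Measure Ω) [IsProbabilityMeasure P]
    (θ ε : ℤ → Ω → ℝ) (μ : ℤ → ℝ) (w : ℤ → Ω → ℝ)
    (hε : ∀ t, MemLp (ε t) 2 P)
    (hw : ∀ t ω, w t ω = μ t * θ t ω + ε t ω)
    (k : ℕ)
    (δ : Ω → ℝ) (lam : ℤ → ℝ) (ν : ℤ → Ω → ℝ)
    (hδ : MemLp δ 2 P) (hν : ∀ t, MemLp (ν t) 2 P)
    (hHIP : ∀ (t : ℤ) (ω : Ω), θ t ω - θ (t - 1) ω = lam t * δ ω + ν t ω)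
    (hδν : ∀ t : ℤ, cov P δ (ν t) = 0)
    (hνν : ∀ t t' : ℤ, t ≠ t' → cov P (ν t) (ν t') = 0)
    (hδε : ∀ t : ℤ, cov P δ (ε t) = 0)
    (hνε : ∀ t t' : ℤ, cov P (ν t) (ε t') = 0)
    (hεε : ∀ t t' : ℤ, (k : ℤ) ≤ |t - t'| → cov P (ε t) (ε t') = 0) :
    ∀ t t' : ℤ, (k : ℤ) + 1 ≤ t - t' →
      μ t ≠ 0 → μ (t - 1) ≠ 0 → μ t' ≠ 0 → μ (t' - 1) ≠ 0 →
      cov P (fun ω => w t ω / μ t - w (t - 1) ω / μ (t - 1))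
        (fun ω => w t' ω / μ t' - w (t' - 1) ω / μ (t' - 1)) =
        lam t * lam t' * Var P δ := by
  intro t t' hgap hμt hμt₁ hμt' hμt'₁
  simp only [cov_eq_covariance] at hδν hνν hδε hνε hεε
  have hG := memLp_scaledGrowth hε μ
  have hgrowth : ∀ s, μ s ≠ 0 → μ (s - 1) ≠ 0 →
      scaledGrowth w μ s = fun ω ↦ lam s * δ ω + (ν s + scaledGrowth ε μ s) ω :=
    fun s hs hs₁ ↦ by
      rw [scaledGrowth_of_eq_mul_add hw hs hs₁]
      funext ω
      rw [hHIP, Pi.add_apply, add_assoc]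
  have hδr : ∀ s, cov[δ, ν s + scaledGrowth ε μ s; P] = 0 := fun s ↦ by
    rw [covariance_add_right hδ (hν s) (hG s), covariance_scaledGrowth_right hδ hε, hδν, hδε,
      hδε]
    simp
  change cov[scaledGrowth w μ t, scaledGrowth w μ t'; P] = lam t * lam t' * cov[δ, δ; P]
  rw [hgrowth t hμt hμt₁, hgrowth t' hμt' hμt'₁]
  exact covariance_const_mul_add_const_mul_add _ _ hδ ((hν t).add (hG t)) ((hν t').add (hG t'))
    (hδr t') (by rw [covariance_comm]; exact hδr t)
    (covariance_add_scaledGrowth_add_scaledGrowth_eq_zero hε hεε μ hgap hν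
      (hνν t t' (by omega)) hνε)

/-- Covariance of scaled residual growth under heterogeneous skill-growth profiles (HIP):
for `t - t' ≥ k + 1`,
`cov (w_t/μ_t − w_{t−1}/μ_{t−1}, w_{t'}/μ_{t'} − w_{t'−1}/μ_{t'−1}) = λ_t λ_{t'} Var δ`. -/
theorem HIP_cov_scaled_growth
    {Ω : Type*} [MeasurableSpace Ω] (P : Measure Ω) [IsProbabilityMeasure P]
    (θ ε : ℤ → Ω → ℝ) (μ : ℤ → ℝ) (w : ℤ → Ω → ℝ)
    (hθ : ∀ t, MemLp (θ t) 2 P) (hε : ∀ t, MemLp (ε t) 2 P)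
    (hw : ∀ t ω, w t ω = μ t * θ t ω + ε t ω)
    (k : ℕ) (hk : 1 ≤ k)
    (δ : Ω → ℝ) (lam : ℤ → ℝ) (ν : ℤ → Ω → ℝ)
    (hδ : MemLp δ 2 P) (hν : ∀ t, MemLp (ν t) 2 P)
    (hHIP : ∀ (t : ℤ) (ω : Ω), θ t ω - θ (t - 1) ω = lam t * δ ω + ν t ω)
    (hδν : ∀ t : ℤ, cov P δ (ν t) = 0)
    (hνν : ∀ t t' : ℤ, t ≠ t' → cov P (ν t) (ν t') = 0)
    (hδε : ∀ t : ℤ, cov P δ (ε t) = 0)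
    (hνε : ∀ t t' : ℤ, cov P (ν t) (ε t') = 0)
    (hεε : ∀ t t' : ℤ, (k : ℤ) ≤ |t - t'| → cov P (ε t) (ε t') = 0) :
    ∀ t t' : ℤ, (k : ℤ) + 1 ≤ t - t' →
      μ t ≠ 0 → μ (t - 1) ≠ 0 → μ t' ≠ 0 → μ (t' - 1) ≠ 0 →
      cov P (fun ω => w t ω / μ t - w (t - 1) ω / μ (t - 1))
        (fun ω => w t' ω / μ t' - w (t' - 1) ω / μ (t' - 1)) =
        lam t * lam t' * Var P δ :=
  HIP_cov_scaled_growth_general P θ ε μ w hε hw k δ lam ν hδ hν hHIP hδν hνν hδε hνε hεε
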